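/- Let f ∈ ℂ[X₀,X₁] be homogeneous of degree d ≥ 2 (not necessarily squarefree) and let F = Y^d − f(X₀,X₁) ∈ ℂ[Y,X₀,X₁]. Write any P ∈ ℂ[Y,X₀,X₁] uniquely as P = Σ_{i≥0} Yⁱ·gᵢ(X₀,X₁) with gᵢ ∈ ℂ[X₀,X₁]. Then P ∈ J_F if and only if gᵢ ∈ J_f for every i with 0 ≤ i ≤ d−2. -/
import Mathlib


open MvPolynomial

/-- The Jacobian ideal of a binary form `f ∈ ℂ[X₀,X₁] = S`: the ideal generated by the two
partial derivatives of `f`. -/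
noncomputable def jacIdealS (f : MvPolynomial (Fin 2) ℂ) : Ideal (MvPolynomial (Fin 2) ℂ) :=
  Ideal.span {pderiv 0 f, pderiv 1 f}

/-- The inclusion `S = ℂ[X₀,X₁] → T = ℂ[Y,X₀,X₁]`, where the variable `Y` of `T` is indexed
by `0` and `X₀, X₁` by `1, 2`. -/
noncomputable def embS : MvPolynomial (Fin 2) ℂ →ₐ[ℂ] MvPolynomial (Fin 3) ℂ :=
  rename Fin.succ

/-- `F = Y^d − f(X₀,X₁) ∈ T = ℂ[Y,X₀,X₁]`. -/
noncomputable def bigF (d : ℕ) (f : MvPolynomial (Fin 2) ℂ) : MvPolynomial (Fin 3) ℂ :=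
  X 0 ^ d - embS f

/-- The Jacobian ideal `J_F ⊆ T` of `F = Y^d − f`: the ideal generated by the three partial
derivatives `∂F/∂Y = d·Y^{d−1}`, `∂F/∂X₀ = −∂f/∂X₀`, `∂F/∂X₁ = −∂f/∂X₁`. -/
noncomputable def jacIdealT (d : ℕ) (f : MvPolynomial (Fin 2) ℂ) :
    Ideal (MvPolynomial (Fin 3) ℂ) :=
  Ideal.span {pderiv 0 (bigF d f), pderiv 1 (bigF d f), pderiv 2 (bigF d f)}

lemma phi_embS (q : MvPolynomial (Fin 2) ℂ) :
    finSuccEquiv ℂ 2 (embS q) = Polynomial.C q := by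
  induction q using MvPolynomial.induction_on with
  | C a => simp [embS, finSuccEquiv_apply]
  | add p q hp hq => simp [map_add, hp, hq]
  | mul_X p i h =>
    simp only [embS] at h
    simp [embS, map_mul, h, finSuccEquiv_X_succ]

lemma pderiv_zero_embS (q : MvPolynomial (Fin 2) ℂ) : pderiv (0 : Fin 3) (embS q) = 0 := by
  induction q using MvPolynomial.induction_on with
  | C a => simp [embS]
  | add p q hp hq =>
    simp only [embS] at hp hq
    simp [embS, hp, hq]
  | mul_X p i h =>
    simp only [embS] at h
    simp only [embS, map_mul, pderiv_mul, rename_X]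
    simp [h, pderiv_X, Pi.single_apply, (Fin.succ_ne_zero i)]

lemma coeff_gsum {S : Type*} [CommRing S] (g : ℕ →₀ S) (j : ℕ) :
    (g.sum fun i c => Polynomial.X ^ i * Polynomial.C c).coeff j = g j := by
  classical
  rw [Finsupp.sum, Polynomial.finset_sum_coeff]
  rw [Finset.sum_congr rfl (fun i _ => by
    rw [mul_comm, Polynomial.C_mul_X_pow_eq_monomial, Polynomial.coeff_monomial])]
  rw [Finset.sum_ite_eq' g.support j]
  split_ifs with h
  · rfl
  · exact (Finsupp.notMem_support_iff.mp h).symm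

lemma key {S : Type*} [CommRing S] (a b : S) (m : ℕ) (Q : Polynomial S) :
    Q ∈ Ideal.span {Polynomial.X ^ m, Polynomial.C a, Polynomial.C b} ↔
      ∀ i < m, Q.coeff i ∈ Ideal.span {a, b} := by
  classical
  constructor
  · intro h i hi
    rw [show ({Polynomial.X ^ m, Polynomial.C a, Polynomial.C b} : Set (Polynomial S)) =
      insert (Polynomial.X ^ m) {Polynomial.C a, Polynomial.C b} from rfl,
      Ideal.mem_span_insert] at h
    obtain ⟨z, y, hy, rfl⟩ := h
    obtain ⟨q, r, rfl⟩ := Ideal.mem_span_pair.mp hy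
    rw [Ideal.mem_span_pair]
    refine ⟨q.coeff i, r.coeff i, ?_⟩
    simp [Polynomial.coeff_add, Polynomial.coeff_mul_X_pow', Polynomial.coeff_mul_C,
      Nat.not_le.mpr hi]
  · intro h
    rw [Q.as_sum_support_C_mul_X_pow]
    refine Ideal.sum_mem _ fun i _ => ?_
    by_cases hi : i < m
    · have hc : Polynomial.C (Q.coeff i) ∈
          Ideal.span ({Polynomial.C a, Polynomial.C b} : Set (Polynomial S)) := by
        have := Ideal.mem_map_of_mem (Polynomial.C : S →+* Polynomial S) (h i hi)
        rwa [Ideal.map_span, Set.image_insert_eq, Set.image_singleton] at this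
      have : Polynomial.C (Q.coeff i) * Polynomial.X ^ i ∈
          Ideal.span ({Polynomial.C a, Polynomial.C b} : Set (Polynomial S)) :=
        Ideal.mul_mem_right _ _ hc
      refine Ideal.span_mono ?_ this
      intro t ht; simp only [Set.mem_insert_iff, Set.mem_singleton_iff] at ht ⊢; tauto
    · push_neg at hi
      have hx : Polynomial.X ^ m ∈
          Ideal.span ({Polynomial.X ^ m, Polynomial.C a, Polynomial.C b} : Set (Polynomial S)) :=
        Ideal.subset_span (Set.mem_insert _ _)
      have : Polynomial.C (Q.coeff i) * Polynomial.X ^ i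
          = (Polynomial.C (Q.coeff i) * Polynomial.X ^ (i - m)) * Polynomial.X ^ m := by
        rw [mul_assoc, pow_sub_mul_pow _ hi]
      rw [this]
      exact Ideal.mul_mem_left _ _ hx

lemma span_triple_eq {R : Type*} [CommRing R] (u x y z : R) (hu : IsUnit u) :
    Ideal.span {u * x, -y, -z} = Ideal.span {x, y, z} := by
  obtain ⟨v, hv⟩ := hu.exists_left_inv
  apply le_antisymm <;> rw [Ideal.span_le] <;> intro t ht <;>
    simp only [Set.mem_insert_iff, Set.mem_singleton_iff] at ht <;>
    rcases ht with rfl | rfl | rfl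
  · exact Ideal.mul_mem_left _ u (Ideal.subset_span (by simp))
  · exact Submodule.neg_mem _ (Ideal.subset_span (by simp))
  · exact Submodule.neg_mem _ (Ideal.subset_span (by simp))
  · have h2 := Ideal.mul_mem_left _ v (Ideal.subset_span (by simp :
      u * t ∈ ({u * t, -y, -z} : Set R)))
    rwa [← mul_assoc, hv, one_mul] at h2
  · have h2 := Submodule.neg_mem _ (Ideal.subset_span (by simp :
      -t ∈ ({u * x, -t, -z} : Set R)))
    rwa [neg_neg] at h2
  · have h2 := Submodule.neg_mem _ (Ideal.subset_span (by simp :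
      -t ∈ ({u * x, -y, -t} : Set R)))
    rwa [neg_neg] at h2

lemma mem_map_equiv' {R S : Type*} [CommRing R] [CommRing S] (e : R ≃+* S) (I : Ideal R) (x : R) :
    e x ∈ I.map (e : R →+* S) ↔ x ∈ I := by
  rw [Ideal.mem_map_iff_of_surjective (e : R →+* S) e.surjective]
  constructor
  · rintro ⟨y, hy, hxy⟩; rwa [← e.injective hxy]
  · exact fun h => ⟨x, h, rfl⟩


/-- Write `P ∈ ℂ[Y,X₀,X₁]` (uniquely) as `P = Σᵢ Yⁱ·gᵢ(X₀,X₁)`.  Then `P ∈ J_F` if and only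
if `gᵢ ∈ J_f` for every `0 ≤ i ≤ d−2`.  (Here `f` is homogeneous of degree `d ≥ 2`, not
necessarily squarefree.) -/
theorem stmt9 (d : ℕ) (hd : 2 ≤ d) (f : MvPolynomial (Fin 2) ℂ) (hf : f.IsHomogeneous d)
    (P : MvPolynomial (Fin 3) ℂ) (g : ℕ →₀ MvPolynomial (Fin 2) ℂ)
    (hP : P = g.sum fun i gi => X 0 ^ i * embS gi) :
    P ∈ jacIdealT d f ↔ ∀ i : ℕ, i ≤ d - 2 → g i ∈ jacIdealS f := by
  classical
  have hd0 : ((d : ℕ) : ℂ) ≠ 0 := by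
    exact Nat.cast_ne_zero.mpr (by omega)
  have hg0 : pderiv (0 : Fin 3) (bigF d f)
      = (d : MvPolynomial (Fin 3) ℂ) * X 0 ^ (d - 1) := by
    simp [bigF, pderiv_pow, pderiv_zero_embS]
  have h1 : (1 : Fin 3) = Fin.succ 0 := rfl
  have h2 : (2 : Fin 3) = Fin.succ 1 := rfl
  have hg1 : pderiv (1 : Fin 3) (bigF d f) = -(embS (pderiv 0 f)) := by
    simp only [bigF, map_sub, embS, h1]
    rw [pderiv_rename (Fin.succ_injective 2)]
    simp [pderiv_pow, pderiv_X, Pi.single_apply]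
  have hg2 : pderiv (2 : Fin 3) (bigF d f) = -(embS (pderiv 1 f)) := by
    simp only [bigF, map_sub, embS, h2]
    rw [pderiv_rename (Fin.succ_injective 2)]
    simp [pderiv_pow, pderiv_X, Pi.single_apply]
  set φ := finSuccEquiv ℂ 2 with hφ
  have hu : IsUnit ((d : ℕ) : Polynomial (MvPolynomial (Fin 2) ℂ)) := by
    have := (isUnit_iff_ne_zero.mpr hd0).map
      (algebraMap ℂ (Polynomial (MvPolynomial (Fin 2) ℂ)))
    rwa [map_natCast] at this
  have hmap : Ideal.map (φ : MvPolynomial (Fin 3) ℂ →+* Polynomial (MvPolynomial (Fin 2) ℂ))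
        (jacIdealT d f)
      = Ideal.span {Polynomial.X ^ (d - 1), Polynomial.C (pderiv 0 f),
          Polynomial.C (pderiv 1 f)} := by
    rw [jacIdealT, Ideal.map_span, Set.image_insert_eq, Set.image_insert_eq,
      Set.image_singleton, hg0, hg1, hg2]
    have e0 : (φ : MvPolynomial (Fin 3) ℂ →+* Polynomial (MvPolynomial (Fin 2) ℂ))
        ((d : MvPolynomial (Fin 3) ℂ) * X 0 ^ (d - 1))
        = ((d : ℕ) : Polynomial (MvPolynomial (Fin 2) ℂ)) * Polynomial.X ^ (d - 1) := by
      simp only [hφ]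
      simp [map_mul, map_pow, map_natCast, finSuccEquiv_X_zero]
    have e1 : (φ : MvPolynomial (Fin 3) ℂ →+* Polynomial (MvPolynomial (Fin 2) ℂ))
        (-(embS (pderiv 0 f))) = -(Polynomial.C (pderiv 0 f)) := by
      simp only [hφ]
      simp [map_neg, phi_embS]
    have e2 : (φ : MvPolynomial (Fin 3) ℂ →+* Polynomial (MvPolynomial (Fin 2) ℂ))
        (-(embS (pderiv 1 f))) = -(Polynomial.C (pderiv 1 f)) := by
      simp only [hφ]
      simp [map_neg, phi_embS]
    rw [e0, e1, e2]
    exact span_triple_eq _ _ _ _ hu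
  have hφP : φ P = g.sum fun i c => Polynomial.X ^ i * Polynomial.C c := by
    rw [hP, map_finsuppSum]
    refine Finsupp.sum_congr fun i _ => ?_
    simp only [hφ]
    rw [map_mul, map_pow, finSuccEquiv_X_zero, phi_embS]
  have main : P ∈ jacIdealT d f ↔ ∀ i < d - 1, (φ P).coeff i ∈ Ideal.span
      {pderiv (0 : Fin 2) f, pderiv 1 f} := by
    rw [← mem_map_equiv' φ.toRingEquiv (jacIdealT d f) P]
    rw [show (φ.toRingEquiv : MvPolynomial (Fin 3) ℂ →+* Polynomial (MvPolynomial (Fin 2) ℂ))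
      = (φ : MvPolynomial (Fin 3) ℂ →+* Polynomial (MvPolynomial (Fin 2) ℂ)) from rfl]
    rw [hmap]
    exact key _ _ _ _
  rw [main]
  constructor
  · intro h i hi
    have := h i (by omega)
    rwa [hφP, coeff_gsum] at this
  · intro h i hi
    rw [hφP, coeff_gsum]
    exact h i (by omega)
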